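/- arXiv:1103.4828 — 3 statements merged into one kernel-verified Lean document; each statement's English description precedes it below -/
import Mathlib

section
/- Let {a_k} be a sequence of positive real numbers such that the series ∑_{k≥1} a_k²/a_{k-1} converges. Then the series ∑_{k≥1} a_k converges. -/
/-!
By AM-GM, `a (k+1) ≤ a (k+1)^2 / a k + a k / 4`. Summing, the partial sums `S` of
`∑ a (k+1)` satisfy `S ≤ B + (a 0 + S) / 4`, with `B` the sum of the convergent series,
so they stay below `(4 B + a 0) / 3`.
-/

open Finset

lemma le_sq_div_add_div_four (x : ℝ) {y : ℝ} (hy : 0 < y) : x ≤ x ^ 2 / y + y / 4 := by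
  have hsq : x ^ 2 / y + y / 4 - x = (x - y / 2) ^ 2 / y := by
    field_simp
    ring
  have : 0 ≤ (x - y / 2) ^ 2 / y := by positivity
  linarith

theorem summable_of_succ_le_add_mul {u b : ℕ → ℝ} {c : ℝ} (hu : ∀ k, 0 ≤ u k)
    (hb : Summable b) (hc₀ : 0 ≤ c) (hc₁ : c < 1) (h : ∀ k, u (k + 1) ≤ b k + c * u k) :
    Summable u := by
  obtain ⟨B, hB⟩ := hb.hasSum.tendsto_sum_nat.bddAbove_range
  have hB' : ∀ n, ∑ k ∈ range n, b k ≤ B := fun n => hB ⟨n, rfl⟩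
  refine (summable_nat_add_iff 1).mp <|
    summable_of_sum_range_le (c := (B + c * u 0) / (1 - c)) (fun k => hu (k + 1)) fun n => ?_
  have hstep : ∑ k ∈ range n, u (k + 1) ≤ ∑ k ∈ range n, b k + c * ∑ k ∈ range n, u k := by
    rw [mul_sum, ← sum_add_distrib]
    exact sum_le_sum fun k _ => h k
  have hshift : ∑ k ∈ range n, u k + u n = ∑ k ∈ range n, u (k + 1) + u 0 := by
    rw [← sum_range_succ, sum_range_succ']
  rw [le_div_iff₀ (by linarith)]
  nlinarith [hB' n, hu n]

theorem stmt_0 (a : ℕ → ℝ) (hpos : ∀ k, 0 < a k)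
    (h : Summable fun k => (a (k + 1)) ^ 2 / a k) :
    Summable fun k => a (k + 1) := by
  have hstep : ∀ k, a (k + 1) ≤ a (k + 1) ^ 2 / a k + 1 / 4 * a k := fun k => by
    linarith [le_sq_div_add_div_four (a (k + 1)) (hpos k)]
  exact (summable_nat_add_iff 1).mpr <|
    summable_of_succ_le_add_mul (fun k => (hpos k).le) h (by norm_num) (by norm_num) hstep
end

section
/- For every positive sequence a : ℕ → ℝ and every j ≥ 1, (∑_{k=1}^{j} a_{k-1})^{1/2} ≤ √(a_0) + (∑_{k=1}^{j} a_k²/a_{k-1})^{1/2}. -/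
/-!
By Cauchy–Schwarz, `∑_{k=1}^j a_k ≤ √S · √T` with `S = ∑_{k=1}^j a_{k-1}` and
`T = ∑_{k=1}^j a_k² / a_{k-1}`, while shifting the index gives `S ≤ a_0 + ∑_{k=1}^j a_k`.
Hence `(√S)² ≤ (√a_0)² + √S · √T`, and such a quadratic inequality forces `√S ≤ √a_0 + √T`.
-/

open Finset

theorem Finset.sum_Icc_one_succ_pred {M : Type*} [AddCommMonoid M] (f : ℕ → M) (j : ℕ) :
    ∑ k ∈ Icc 1 (j + 1), f (k - 1) = f 0 + ∑ k ∈ Icc 1 j, f k := by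
  induction j with
  | zero => simp
  | succ n ih =>
    rw [sum_Icc_succ_top (by omega), ih, sum_Icc_succ_top (by omega), Nat.add_sub_cancel,
      add_assoc]

theorem Finset.sum_Icc_one_pred_le {M : Type*} [AddCommMonoid M] [PartialOrder M]
    [IsOrderedAddMonoid M] {f : ℕ → M} {j : ℕ} (hf : 0 ≤ f j) :
    ∑ k ∈ Icc 1 j, f (k - 1) ≤ f 0 + ∑ k ∈ Icc 1 j, f k := by
  rw [← sum_Icc_one_succ_pred, sum_Icc_succ_top (by omega), Nat.add_sub_cancel]
  exact le_add_of_nonneg_right hf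

theorem Finset.sum_le_sqrt_mul_sqrt_sum_sq_div {ι : Type*} (s : Finset ι) (f : ι → ℝ)
    {g : ι → ℝ} (hg : ∀ i ∈ s, 0 < g i) :
    ∑ i ∈ s, f i ≤ √(∑ i ∈ s, g i) * √(∑ i ∈ s, f i ^ 2 / g i) := by
  rw [← Real.sqrt_mul (sum_nonneg fun i hi ↦ (hg i hi).le)]
  refine (le_abs_self _).trans (Real.abs_le_sqrt ?_)
  refine sum_sq_le_sum_mul_sum_of_sq_le_mul s (fun i hi ↦ (hg i hi).le)
    (fun i hi ↦ div_nonneg (sq_nonneg _) (hg i hi).le) fun i hi ↦ ?_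
  rw [mul_div_cancel₀ _ (hg i hi).ne']

theorem le_add_of_sq_le_sq_add_mul {x y z : ℝ} (hy : 0 ≤ y) (hz : 0 ≤ z)
    (h : x ^ 2 ≤ y ^ 2 + x * z) : x ≤ y + z := by
  by_contra! hlt
  nlinarith [mul_lt_mul'' (hlt.trans_le' (le_add_of_nonneg_right hz)) (by linarith : y < x - z)
    hy hy]

theorem stmt_2_general (a : ℕ → ℝ) (hpos : ∀ k, 0 < a k) (j : ℕ) :
    Real.sqrt (∑ k ∈ Finset.Icc 1 j, a (k - 1)) ≤
      Real.sqrt (a 0) + Real.sqrt (∑ k ∈ Finset.Icc 1 j, (a k) ^ 2 / a (k - 1)) := by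
  set S := ∑ k ∈ Icc 1 j, a (k - 1)
  set T := ∑ k ∈ Icc 1 j, a k ^ 2 / a (k - 1)
  refine le_add_of_sq_le_sq_add_mul (Real.sqrt_nonneg _) (Real.sqrt_nonneg _) ?_
  rw [Real.sq_sqrt (sum_nonneg fun k _ ↦ (hpos _).le), Real.sq_sqrt (hpos 0).le]
  calc S ≤ a 0 + ∑ k ∈ Icc 1 j, a k := sum_Icc_one_pred_le (hpos j).le
    _ ≤ a 0 + √S * √T := by
      gcongr
      exact sum_le_sqrt_mul_sqrt_sum_sq_div _ _ fun k _ ↦ hpos (k - 1)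

theorem stmt_2 (a : ℕ → ℝ) (hpos : ∀ k, 0 < a k) (j : ℕ) (hj : 1 ≤ j) :
    Real.sqrt (∑ k ∈ Finset.Icc 1 j, a (k - 1)) ≤
      Real.sqrt (a 0) + Real.sqrt (∑ k ∈ Finset.Icc 1 j, (a k) ^ 2 / a (k - 1)) :=
  stmt_2_general a hpos j
end

section
/- Let f : ℝⁿ → ℝ ∪ {+∞} be proper, lower semicontinuous, bounded below, and continuous on its domain, satisfying the KL property at every point of dom ∂f. Let {x_k} be a bounded sequence with x_0 ∈ dom f satisfying, for constants a, b > 0: (H1) f(x_{k+1}) + a‖x_{k+1} − x_k‖² ≤ f(x_k), and (H2) there exists w_{k+1} ∈ ∂f(x_{k+1}) with ‖w_{k+1}‖ ≤ b‖x_{k+1} − x_k‖. Then ∑ ‖x_{k+1} − x_k‖ < ∞ and {x_k} converges to a critical point x̃ of f (i.e., 0 ∈ ∂f(x̃)), with f(x_k) → f(x̃). -/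
/-!
The values `f (x k)` decrease to a limit `L` and the steps `‖x (k+1) - x k‖` tend to `0` by (H1).
A cluster point `xt` of the bounded sequence has `f xt = L` by lower semicontinuity and continuity
on the domain, and `0 ∈ ∂f xt` by (H2) and closedness of the limiting subdifferential. Near `xt`,
(H1), (H2), the concavity of the desingularising function `φ` and the KL inequality combine, via
AM-GM, into `2 d (k+1) ≤ d k + (b / a) (φ (f (x (k+1)) - L) - φ (f (x (k+2)) - L))` for the step
lengths `d`. This telescopes to a bound on the length of the path, so a sequence that starts close
enough to `xt` never leaves the KL neighbourhood; hence it has finite length and converges to `xt`.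
-/

open Filter

/-- The Fréchet subdifferential of an extended-real-valued function. -/
def frechetSubdiff {n : ℕ} (f : EuclideanSpace ℝ (Fin n) → EReal)
    (x : EuclideanSpace ℝ (Fin n)) : Set (EuclideanSpace ℝ (Fin n)) :=
  {v | f x ≠ ⊤ ∧ ∀ ε : ℝ, 0 < ε → ∀ᶠ y in nhds x,
      f x + (((inner ℝ v (y - x) : ℝ) - ε * ‖y - x‖ : ℝ) : EReal) ≤ f y}

/-- The limiting (Mordukhovich) subdifferential. -/
def limitingSubdiff {n : ℕ} (f : EuclideanSpace ℝ (Fin n) → EReal)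
    (x : EuclideanSpace ℝ (Fin n)) : Set (EuclideanSpace ℝ (Fin n)) :=
  {v | ∃ xs vs : ℕ → EuclideanSpace ℝ (Fin n),
      (∀ k, vs k ∈ frechetSubdiff f (xs k)) ∧
      Tendsto xs atTop (nhds x) ∧ Tendsto vs atTop (nhds v) ∧
      Tendsto (fun k => f (xs k)) atTop (nhds (f x))}

/-- The Kurdyka–Łojasiewicz property at a point. -/
def KLAt {n : ℕ} (f : EuclideanSpace ℝ (Fin n) → EReal)
    (xbar : EuclideanSpace ℝ (Fin n)) : Prop :=
  ∃ η : ℝ, 0 < η ∧ ∃ U ∈ nhds xbar, ∃ φ φ' : ℝ → ℝ,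
    φ 0 = 0 ∧ (∀ s ∈ Set.Ico (0 : ℝ) η, 0 ≤ φ s) ∧
    ContinuousOn φ (Set.Ico 0 η) ∧ ConcaveOn ℝ (Set.Ico 0 η) φ ∧
    (∀ s ∈ Set.Ioo (0 : ℝ) η, HasDerivAt φ (φ' s) s ∧ 0 < φ' s) ∧
    ∀ x ∈ U, f xbar < f x → f x < f xbar + (η : EReal) →
      ∀ v ∈ limitingSubdiff f x,
        1 ≤ φ' ((f x).toReal - (f xbar).toReal) * ‖v‖

open Finset Metric Topology

lemma ConcaveOn.mul_sub_le_sub_of_hasDerivAt {S : Set ℝ} {φ : ℝ → ℝ} {φ' s t : ℝ}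
    (hφ : ConcaveOn ℝ S φ) (hs : s ∈ S) (ht : t ∈ S) (hst : s ≤ t) (hφ' : HasDerivAt φ φ' t) :
    φ' * (t - s) ≤ φ t - φ s := by
  rcases hst.eq_or_lt with rfl | hlt
  · simp
  have := hφ.le_slope_of_hasDerivAt hs ht hlt hφ'
  rwa [slope_def_field, le_div_iff₀ (sub_pos.2 hlt)] at this

lemma two_mul_le_add_of_mul_sq_le {a b d₀ d₁ u : ℝ} (ha : 0 < a) (hb : 0 ≤ b) (hd₀ : 0 ≤ d₀)
    (hu : 0 ≤ u) (h : a * d₁ ^ 2 ≤ u * (b * d₀)) : 2 * d₁ ≤ d₀ + b / a * u := by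
  have hv : 0 ≤ b / a * u := by positivity
  have hsq : d₁ ^ 2 ≤ d₀ * (b / a * u) := by
    rw [← mul_le_mul_iff_right₀ ha]
    calc a * d₁ ^ 2 ≤ u * (b * d₀) := h
      _ = a * (d₀ * (b / a * u)) := by field_simp
  nlinarith [sq_nonneg (d₀ - b / a * u), sq_nonneg (d₀ + b / a * u - 2 * d₁)]

lemma sum_range_add_le_of_two_mul_le {d T : ℕ → ℝ} {m : ℕ}
    (h : ∀ i < m, 2 * d (i + 1) ≤ d i + (T i - T (i + 1))) :
    ∑ i ∈ range m, d (i + 1) + d m ≤ d 0 + (T 0 - T m) := by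
  induction m with
  | zero => simp
  | succ m ih =>
    rw [sum_range_succ]
    linarith [ih fun i hi => h i (by omega), h m (by omega)]

/-- The step inequality telescopes to a bound on the path length, which in turn keeps the iterates
inside the ball where the step inequality is available. -/
theorem summable_dist_of_two_mul_dist_le {X : Type*} [PseudoMetricSpace X] {x : ℕ → X} {y : X}
    {S : ℕ → ℝ} {δ : ℝ} (hS : ∀ k, 0 ≤ S k)
    (hstep : ∀ k, dist (x (k + 1)) y < δ →
      2 * dist (x (k + 1)) (x (k + 2)) ≤ dist (x k) (x (k + 1)) + (S (k + 1) - S (k + 2)))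
    (hstart : dist (x 0) y + 2 * dist (x 0) (x 1) + S 1 < δ) :
    Summable fun k => dist (x k) (x (k + 1)) := by
  have hsum : ∀ m, (∀ i < m, dist (x (i + 1)) y < δ) →
      ∑ i ∈ range m, dist (x (i + 1)) (x (i + 2)) ≤ dist (x 0) (x 1) + S 1 := fun m hm => by
    have := sum_range_add_le_of_two_mul_le (d := fun i => dist (x i) (x (i + 1)))
      (T := fun i => S (i + 1)) fun i hi => hstep i (hm i hi)
    linarith [hS (m + 1), dist_nonneg (x := x m) (y := x (m + 1))]
  have hball : ∀ m, dist (x (m + 1)) y < δ := by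
    intro m
    induction m using Nat.strong_induction_on with
    | _ m ih =>
      calc dist (x (m + 1)) y ≤ dist (x 1) (x (m + 1)) + (dist (x 1) (x 0) + dist (x 0) y) :=
            (dist_triangle_left _ _ _).trans (add_le_add le_rfl (dist_triangle _ _ _))
        _ ≤ (dist (x 0) (x 1) + S 1) + (dist (x 0) (x 1) + dist (x 0) y) := by
          gcongr
          · exact (dist_le_range_sum_dist (fun i => x (i + 1)) m).trans (hsum m ih)
          · exact (dist_comm _ _).le
        _ < δ := by linarith
  exact (summable_nat_add_iff 1).1 <| summable_of_sum_range_le (fun _ => dist_nonneg)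
    fun m => hsum m fun i _ => hball i

lemma tendsto_zero_of_add_mul_sq_le {F d : ℕ → ℝ} {a L : ℝ} (ha : 0 < a)
    (h : ∀ k, F (k + 1) + a * d k ^ 2 ≤ F k) (hd : ∀ k, 0 ≤ d k) (hF : Tendsto F atTop (𝓝 L)) :
    Tendsto d atTop (𝓝 0) := by
  have hgap : Tendsto (fun k => √((F k - F (k + 1)) / a)) atTop (𝓝 0) := by
    simpa using ((hF.sub (hF.comp (tendsto_add_atTop_nat 1))).div_const a).sqrt
  refine squeeze_zero hd (fun k => Real.le_sqrt_of_sq_le ?_) hgap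
  rw [le_div_iff₀ ha]
  linarith [h k]

lemma ne_top_of_add_coe_le {u : ℕ → EReal} {c : ℕ → ℝ} (h : ∀ k, u (k + 1) + c k ≤ u k)
    (h0 : u 0 ≠ ⊤) (k : ℕ) : u k ≠ ⊤ := by
  induction k with
  | zero => exact h0
  | succ k ih =>
    intro htop
    have := h k
    rw [htop, EReal.top_add_coe, top_le_iff] at this
    exact ih this

lemma LowerSemicontinuousAt.apply_eq_of_tendsto {X α : Type*} [TopologicalSpace X]
    {f : X → EReal} {l : Filter α} [l.NeBot] {u : α → X} {y : X} {L : ℝ}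
    (hlsc : LowerSemicontinuousAt f y) (hcont : ContinuousOn f {z | f z ≠ ⊤})
    (hu : Tendsto u l (𝓝 y)) (hfu : Tendsto (f ∘ u) l (𝓝 L)) : f y = L := by
  have hy : f y ≠ ⊤ := by
    intro htop
    have hfar := hu.eventually
      (hlsc (L + 1 : ℝ) (htop.symm ▸ EReal.coe_lt_top _ : ((L + 1 : ℝ) : EReal) < f y))
    have hnear := hfu.eventually (gt_mem_nhds (EReal.coe_lt_coe_iff.2 (lt_add_one L)))
    obtain ⟨k, hfar, hnear⟩ := (hfar.and hnear).exists
    exact lt_asymm hfar hnear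
  have hdom : ∀ᶠ k in l, u k ∈ {z | f z ≠ ⊤} :=
    (hfu.eventually (gt_mem_nhds (EReal.coe_lt_top L))).mono fun _ h => h.ne
  exact tendsto_nhds_unique ((hcont y hy).tendsto.comp (tendsto_nhdsWithin_iff.2 ⟨hu, hdom⟩)) hfu

def frechetSubdiffGraph {n : ℕ} (f : EuclideanSpace ℝ (Fin n) → EReal) :
    Set (EuclideanSpace ℝ (Fin n) × EReal × EuclideanSpace ℝ (Fin n)) :=
  {p | p.2.1 = f p.1 ∧ p.2.2 ∈ frechetSubdiff f p.1}

section Subdifferential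

variable {n : ℕ} {f : EuclideanSpace ℝ (Fin n) → EReal}

lemma mem_limitingSubdiff_iff_mem_closure {x v : EuclideanSpace ℝ (Fin n)} :
    v ∈ limitingSubdiff f x ↔ (x, f x, v) ∈ closure (frechetSubdiffGraph f) := by
  rw [mem_closure_iff_seq_limit]
  constructor
  · rintro ⟨xs, vs, hvs, hx, hv, hf⟩
    exact ⟨fun k => (xs k, f (xs k), vs k), fun k => ⟨rfl, hvs k⟩,
      hx.prodMk_nhds (hf.prodMk_nhds hv)⟩
  · rintro ⟨p, hp, hlim⟩
    refine ⟨fun k => (p k).1, fun k => (p k).2.2, fun k => (hp k).2,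
      (continuous_fst.tendsto _).comp hlim, (continuous_snd.snd.tendsto _).comp hlim, ?_⟩
    simp_rw [← (hp _).1]
    exact (continuous_snd.fst.tendsto _).comp hlim

lemma mem_limitingSubdiff_of_tendsto {y w : ℕ → EuclideanSpace ℝ (Fin n)}
    {x v : EuclideanSpace ℝ (Fin n)} (hw : ∀ k, w k ∈ limitingSubdiff f (y k))
    (hy : Tendsto y atTop (𝓝 x)) (hv : Tendsto w atTop (𝓝 v))
    (hf : Tendsto (fun k => f (y k)) atTop (𝓝 (f x))) : v ∈ limitingSubdiff f x := by
  rw [mem_limitingSubdiff_iff_mem_closure]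
  exact isClosed_closure.mem_of_tendsto (hy.prodMk_nhds (hf.prodMk_nhds hv))
    (Eventually.of_forall fun k => mem_limitingSubdiff_iff_mem_closure.1 (hw k))

end Subdifferential

section KL

variable {n : ℕ} {f : EuclideanSpace ℝ (Fin n) → EReal}

/-- Concavity upgrades the pointwise KL inequality `1 ≤ φ'(t) ‖v‖` to this integrated form,
which is what a descent step can be compared with. -/
lemma KLAt.exists_sub_le_mul_norm {xt : EuclideanSpace ℝ (Fin n)} {L : ℝ} (hKL : KLAt f xt)
    (hL : f xt = L) :
    ∃ δ > 0, ∃ η > 0, ∃ φ : ℝ → ℝ, φ 0 = 0 ∧ ContinuousWithinAt φ (Set.Ico 0 η) 0 ∧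
      MonotoneOn φ (Set.Ico 0 η) ∧
      ∀ y ∈ ball xt δ, ∀ s t : ℝ, 0 ≤ s → s ≤ t → t < η → f y = ((L + t : ℝ) : EReal) →
        ∀ v ∈ limitingSubdiff f y, t - s ≤ (φ t - φ s) * ‖v‖ := by
  obtain ⟨η, hη, U, hU, φ, φ', hφ0, -, hφc, hφconc, hφ', hKL⟩ := hKL
  obtain ⟨δ, hδ, hball⟩ := Metric.mem_nhds_iff.1 hU
  have htangent : ∀ s t, 0 ≤ s → s ≤ t → 0 < t → t < η → φ' t * (t - s) ≤ φ t - φ s :=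
    fun s t hs hst ht htη => hφconc.mul_sub_le_sub_of_hasDerivAt ⟨hs, by linarith⟩ ⟨ht.le, htη⟩
      hst (hφ' t ⟨ht, htη⟩).1
  refine ⟨δ, hδ, η, hη, φ, hφ0, hφc 0 ⟨le_rfl, hη⟩, fun s hs t ht hst => ?_, ?_⟩
  · rcases (hs.1.trans hst).eq_or_lt with ht0 | ht0
    · rw [le_antisymm (ht0 ▸ hst) hs.1, ← ht0]
    · have := htangent s t hs.1 hst ht0 ht.2
      nlinarith [(hφ' t ⟨ht0, ht.2⟩).2]
  · intro y hy s t hs hst htη hfy v hv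
    rcases hst.eq_or_lt with rfl | hlt
    · simp
    have ht : 0 < t := hs.trans_lt hlt
    have hφ'v : 1 ≤ φ' t * ‖v‖ := by
      have := hKL y (hball hy) (by rw [hL, hfy]; exact_mod_cast (by linarith : L < L + t))
        (by rw [hL, hfy]; exact_mod_cast (by linarith : L + t < L + η)) v hv
      rwa [hfy, hL, EReal.toReal_coe, EReal.toReal_coe, add_sub_cancel_left] at this
    calc t - s ≤ (φ' t * ‖v‖) * (t - s) := le_mul_of_one_le_left (by linarith) hφ'v
      _ = φ' t * (t - s) * ‖v‖ := by ring
      _ ≤ (φ t - φ s) * ‖v‖ :=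
        mul_le_mul_of_nonneg_right (htangent s t hs hst ht htη) (norm_nonneg v)

theorem summable_norm_sub_of_KLAt {xt : EuclideanSpace ℝ (Fin n)} {L a b : ℝ}
    {x : ℕ → EuclideanSpace ℝ (Fin n)} {F : ℕ → ℝ} (ha : 0 < a) (hb : 0 ≤ b)
    (hKL : KLAt f xt) (hfxt : f xt = L) (hxt : MapClusterPt xt atTop x)
    (hF : ∀ k, f (x k) = F k) (hFL : Tendsto F atTop (𝓝 L)) (hLF : ∀ k, L ≤ F k)
    (hd : Tendsto (fun k => ‖x (k + 1) - x k‖) atTop (𝓝 0))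
    (hdesc : ∀ k, F (k + 1) + a * ‖x (k + 1) - x k‖ ^ 2 ≤ F k)
    (hsubgrad : ∀ k, ∃ w ∈ limitingSubdiff f (x (k + 1)), ‖w‖ ≤ b * ‖x (k + 1) - x k‖) :
    Summable fun k => ‖x (k + 1) - x k‖ := by
  obtain ⟨δ, hδ, η, hη, φ, hφ0, hφc, hφmono, hφ⟩ := hKL.exists_sub_le_mul_norm hfxt
  choose w hw hwb using hsubgrad
  have hdist : ∀ k, dist (x k) (x (k + 1)) = ‖x (k + 1) - x k‖ := fun k => by
    rw [dist_comm, dist_eq_norm]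
  set S : ℕ → ℝ := fun k => b / a * φ (F k - L)
  obtain ⟨K, hK⟩ := eventually_atTop.1 (hFL.eventually (gt_mem_nhds (lt_add_of_pos_right L hη)))
  have hmem : ∀ k ≥ K, F k - L ∈ Set.Ico 0 η := fun k hk =>
    ⟨sub_nonneg.2 (hLF k), by linarith [hK k hk]⟩
  have hstep : ∀ k ≥ K, dist (x (k + 1)) xt < δ →
      2 * dist (x (k + 1)) (x (k + 2)) ≤ dist (x k) (x (k + 1)) + (S (k + 1) - S (k + 2)) := by
    intro k hk hxk
    have hdesc' := hdesc (k + 1)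
    have hφle : φ (F (k + 2) - L) ≤ φ (F (k + 1) - L) :=
      hφmono (hmem _ (by omega)) (hmem _ (by omega)) (by nlinarith)
    have hKLk := hφ (x (k + 1)) hxk (F (k + 2) - L) (F (k + 1) - L) (sub_nonneg.2 (hLF _))
      (by nlinarith) (hmem _ (by omega)).2 (by rw [hF]; congr 1; ring) (w k) (hw k)
    simp only [hdist, S, ← mul_sub]
    refine two_mul_le_add_of_mul_sq_le ha hb (norm_nonneg _) (sub_nonneg.2 hφle) ?_
    calc a * ‖x (k + 1 + 1) - x (k + 1)‖ ^ 2 ≤ (F (k + 1) - L) - (F (k + 2) - L) := by linarith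
      _ ≤ (φ (F (k + 1) - L) - φ (F (k + 2) - L)) * ‖w k‖ := hKLk
      _ ≤ _ := mul_le_mul_of_nonneg_left (hwb k) (sub_nonneg.2 hφle)
  have hS : Tendsto S atTop (𝓝 0) := by
    have hgap : Tendsto (fun k => F k - L) atTop (𝓝[Set.Ico 0 η] 0) :=
      tendsto_nhdsWithin_iff.2 ⟨by simpa using hFL.sub_const L, eventually_atTop.2 ⟨K, hmem⟩⟩
    simpa [hφ0] using (hφc.tendsto.comp hgap).const_mul (b / a)
  obtain ⟨p, hpx, hpK, hp⟩ : ∃ p, dist (x p) xt < δ / 2 ∧ K ≤ p ∧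
      2 * dist (x p) (x (p + 1)) + S (p + 1) < δ / 2 := by
    have hsmall : Tendsto (fun k => 2 * dist (x k) (x (k + 1)) + S (k + 1)) atTop (𝓝 0) := by
      simpa [hdist] using (hd.const_mul 2).add (hS.comp (tendsto_add_atTop_nat 1))
    exact ((mapClusterPt_iff_frequently.1 hxt _ (ball_mem_nhds xt (half_pos hδ))).and_eventually
      ((eventually_ge_atTop K).and (hsmall.eventually (gt_mem_nhds (half_pos hδ))))).exists
  have htail := summable_dist_of_two_mul_dist_le (x := fun i => x (p + i)) (y := xt)
    (S := fun i => S (p + i)) (fun i => mul_nonneg (div_nonneg hb ha.le) ?_)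
    (fun i hi => hstep (p + i) (by omega) hi) (by simp only [add_zero]; linarith)
  · simp only [← hdist]
    refine (summable_nat_add_iff p).1 (htail.congr fun i => ?_)
    rw [add_comm i p, add_assoc]
  · rw [← hφ0]
    exact hφmono ⟨le_rfl, hη⟩ (hmem _ (by omega)) (hmem _ (by omega)).1

end KL

lemma zero_mem_limitingSubdiff_of_subseq {n : ℕ} {f : EuclideanSpace ℝ (Fin n) → EReal} {b : ℝ}
    {x : ℕ → EuclideanSpace ℝ (Fin n)} {xt : EuclideanSpace ℝ (Fin n)} {ψ : ℕ → ℕ}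
    (hψ : Tendsto ψ atTop atTop) (hxψ : Tendsto (x ∘ ψ) atTop (𝓝 xt))
    (hd : Tendsto (fun k => ‖x (k + 1) - x k‖) atTop (𝓝 0))
    (hfx : Tendsto (fun k => f (x k)) atTop (𝓝 (f xt)))
    (hsubgrad : ∀ k, ∃ w ∈ limitingSubdiff f (x (k + 1)), ‖w‖ ≤ b * ‖x (k + 1) - x k‖) :
    (0 : EuclideanSpace ℝ (Fin n)) ∈ limitingSubdiff f xt := by
  choose w hw hwb using hsubgrad
  have hdψ := hd.comp hψ
  refine mem_limitingSubdiff_of_tendsto (y := fun j => x (ψ j + 1)) (w := fun j => w (ψ j))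
    (fun j => hw (ψ j)) ?_ ?_ (hfx.comp ((tendsto_add_atTop_nat 1).comp hψ))
  · simpa using (tendsto_zero_iff_norm_tendsto_zero.2 hdψ).add hxψ
  · exact squeeze_zero_norm (fun j => hwb (ψ j)) (by simpa using hdψ.const_mul b)

theorem stmt_14_general {n : ℕ} (f : EuclideanSpace ℝ (Fin n) → EReal)
    (hbot : ∀ z, f z ≠ ⊥)
    (hlsc : LowerSemicontinuous f)
    (hbdd : ∃ m : ℝ, ∀ z, (m : EReal) ≤ f z)
    (hcont : ContinuousOn f {z | f z ≠ ⊤})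
    (hKL : ∀ z, (limitingSubdiff f z).Nonempty → KLAt f z)
    (a b : ℝ) (ha : 0 < a) (hb : 0 < b)
    (x : ℕ → EuclideanSpace ℝ (Fin n))
    (hx0 : f (x 0) ≠ ⊤)
    (hbound : ∃ R : ℝ, ∀ k, ‖x k‖ ≤ R)
    (hH1 : ∀ k, f (x (k + 1)) + ((a * ‖x (k + 1) - x k‖ ^ 2 : ℝ) : EReal) ≤ f (x k))
    (hH2 : ∀ k, ∃ w ∈ limitingSubdiff f (x (k + 1)), ‖w‖ ≤ b * ‖x (k + 1) - x k‖) :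
    (Summable fun k => ‖x (k + 1) - x k‖) ∧
      ∃ xt : EuclideanSpace ℝ (Fin n),
        Tendsto x atTop (nhds xt) ∧
        (0 : EuclideanSpace ℝ (Fin n)) ∈ limitingSubdiff f xt ∧
        Tendsto (fun k => f (x k)) atTop (nhds (f xt)) := by
  obtain ⟨m, hm⟩ := hbdd
  obtain ⟨R, hR⟩ := hbound
  set F : ℕ → ℝ := fun k => (f (x k)).toReal
  have hF : ∀ k, f (x k) = F k := fun k =>
    (EReal.coe_toReal (ne_top_of_add_coe_le (u := fun k => f (x k)) hH1 hx0 k) (hbot _)).symm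
  have hdesc : ∀ k, F (k + 1) + a * ‖x (k + 1) - x k‖ ^ 2 ≤ F k := fun k => by
    simpa only [hF, ← EReal.coe_add, EReal.coe_le_coe_iff] using hH1 k
  have hanti : Antitone F := antitone_nat_of_succ_le fun k => by nlinarith [hdesc k]
  have hFL := tendsto_atTop_ciInf hanti ⟨m, by rintro _ ⟨k, rfl⟩; simpa [hF] using hm (x k)⟩
  have hd := tendsto_zero_of_add_mul_sq_le ha hdesc (fun _ => norm_nonneg _) hFL
  obtain ⟨xt, -, ψ, hψ, hxψ⟩ := tendsto_subseq_of_bounded (isBounded_closedBall (x := 0) (r := R))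
    fun k => mem_closedBall_zero_iff.2 (hR k)
  have hfxt := LowerSemicontinuousAt.apply_eq_of_tendsto (hlsc xt) hcont hxψ
    (by simpa only [Function.comp_def, hF] using EReal.tendsto_coe.2 (hFL.comp hψ.tendsto_atTop))
  have hfx : Tendsto (fun k => f (x k)) atTop (𝓝 (f xt)) := by
    simpa only [hfxt, hF] using EReal.tendsto_coe.2 hFL
  have h0 := zero_mem_limitingSubdiff_of_subseq hψ.tendsto_atTop hxψ hd hfx hH2
  have hsum := summable_norm_sub_of_KLAt ha hb.le (hKL xt ⟨0, h0⟩) hfxt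
    (hxψ.mapClusterPt.of_comp hψ.tendsto_atTop) hF hFL (fun k => hanti.le_of_tendsto hFL k) hd
    hdesc hH2
  have hcauchy : CauchySeq x :=
    cauchySeq_of_summable_dist (hsum.congr fun k => by rw [dist_comm, dist_eq_norm])
  exact ⟨hsum, xt, tendsto_nhds_of_cauchySeq_of_subseq hcauchy hψ.tendsto_atTop hxψ, h0, hfx⟩

/-- Abstract convergence of inexact descent sequences for KL functions
(Euclidean case of Theorem 5.1 of the paper). -/
theorem stmt_14 {n : ℕ} (f : EuclideanSpace ℝ (Fin n) → EReal)
    (hproper : ∃ z, f z ≠ ⊤) (hbot : ∀ z, f z ≠ ⊥)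
    (hlsc : LowerSemicontinuous f)
    (hbdd : ∃ m : ℝ, ∀ z, (m : EReal) ≤ f z)
    (hcont : ContinuousOn f {z | f z ≠ ⊤})
    (hKL : ∀ z, (limitingSubdiff f z).Nonempty → KLAt f z)
    (a b : ℝ) (ha : 0 < a) (hb : 0 < b)
    (x : ℕ → EuclideanSpace ℝ (Fin n))
    (hx0 : f (x 0) ≠ ⊤)
    (hbound : ∃ R : ℝ, ∀ k, ‖x k‖ ≤ R)
    (hH1 : ∀ k, f (x (k + 1)) + ((a * ‖x (k + 1) - x k‖ ^ 2 : ℝ) : EReal) ≤ f (x k))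
    (hH2 : ∀ k, ∃ w ∈ limitingSubdiff f (x (k + 1)), ‖w‖ ≤ b * ‖x (k + 1) - x k‖) :
    (Summable fun k => ‖x (k + 1) - x k‖) ∧
      ∃ xt : EuclideanSpace ℝ (Fin n),
        Tendsto x atTop (nhds xt) ∧
        (0 : EuclideanSpace ℝ (Fin n)) ∈ limitingSubdiff f xt ∧
        Tendsto (fun k => f (x k)) atTop (nhds (f xt)) :=
  stmt_14_general f hbot hlsc hbdd hcont hKL a b ha hb x hx0 hbound hH1 hH2
end
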